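/- Let S = ((X,d), (f_i)_{i∈I}) be an iterated function system consisting of convex contractions with attractor A (the unique fixed point of F_S in 𝒦(X)), and for each ω ∈ I^ℕ let a_ω be the associated point with h(f_{[ω]_n}(B), {a_ω}) → 0 for all B ∈ 𝒦(X). Then A equals the closure of {a_ω : ω ∈ I^ℕ}. -/

import Mathlib

/-!
Every point of `A` has an infinite backward orbit inside `A`, which encodes a word `ω` with
`x ∈ f_{[ω]_n}(A)` for all `n`; as these images shrink to `{a_ω}` in the Hausdorff distance,
`x = a_ω`. Conversely the images `f_{[ω]_n}(A)` stay inside the closed set `A`, so their limit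
point `a_ω` lies in `A`.
-/

/-- `compWord f ω n = f (ω 0) ∘ f (ω 1) ∘ ... ∘ f (ω (n-1))`, i.e. the composition
`f_{ω₁} ∘ ... ∘ f_{ω_n}` determined by the first `n` letters of the word `ω`. -/
def compWord {I X : Type*} (f : I → X → X) : (ℕ → I) → ℕ → X → X
  | _, 0 => id
  | ω, n + 1 => f (ω 0) ∘ compWord f (fun k => ω (k + 1)) n

open Set Filter Metric

section HausdorffLimit

variable {X ι : Type*} [PseudoEMetricSpace X] {l : Filter ι} {s : ι → Set X} {p : X}

theorem edist_eq_zero_of_forall_mem_of_tendsto_hausdorffEDist_singleton [l.NeBot]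
    (hs : Tendsto (fun n => hausdorffEDist (s n) {p}) l (nhds 0)) {x : X}
    (hx : ∀ n, x ∈ s n) : edist x p = 0 := by
  refine le_antisymm (ge_of_tendsto' hs fun n => ?_) zero_le
  simpa only [infEDist_singleton] using infEDist_le_hausdorffEDist_of_mem (t := {p}) (hx n)

theorem mem_of_tendsto_hausdorffEDist_singleton [l.NeBot]
    (hs : Tendsto (fun n => hausdorffEDist (s n) {p}) l (nhds 0)) {A : Set X}
    (hA : IsClosed A) (hsA : ∀ n, s n ⊆ A) : p ∈ A := by
  refine (mem_iff_infEDist_zero_of_closed hA).2 <|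
    le_antisymm (ge_of_tendsto' hs fun n => ?_) zero_le
  calc infEDist p A ≤ infEDist p (s n) := infEDist_anti (hsA n)
    _ ≤ hausdorffEDist {p} (s n) := infEDist_le_hausdorffEDist_of_mem rfl
    _ = hausdorffEDist (s n) {p} := hausdorffEDist_comm

end HausdorffLimit

section CompWord

variable {I X : Type*} (f : I → X → X)

theorem compWord_succ_apply' (n : ℕ) (ω : ℕ → I) (x : X) :
    compWord f ω (n + 1) x = compWord f ω n (f (ω n) x) := by
  induction n generalizing ω with
  | zero => rfl
  | succ n ih => exact congrArg (f (ω 0)) (ih fun k => ω (k + 1))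

variable {f} {A : Set X}

theorem mapsTo_compWord (hA : ∀ i, MapsTo (f i) A A) (ω : ℕ → I) (n : ℕ) :
    MapsTo (compWord f ω n) A A := by
  induction n generalizing ω with
  | zero => exact mapsTo_id A
  | succ n ih => exact (hA (ω 0)).comp (ih fun k => ω (k + 1))

theorem exists_word_forall_mem_image_compWord (hA : A ⊆ ⋃ i, f i '' A) {x : X} (hx : x ∈ A) :
    ∃ ω : ℕ → I, ∀ n, x ∈ compWord f ω n '' A := by
  have hpre : ∀ y : A, ∃ i, ∃ z : A, f i z = y := fun y => by
    obtain ⟨i, z, hz, hzy⟩ := mem_iUnion.1 (hA y.2)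
    exact ⟨i, ⟨z, hz⟩, hzy⟩
  choose letter pre hpre using hpre
  let orbit (n : ℕ) : A := pre^[n] ⟨x, hx⟩
  refine ⟨fun n => letter (orbit n), fun n => ⟨orbit n, (orbit n).2, ?_⟩⟩
  induction n with
  | zero => rfl
  | succ n ih =>
    rw [compWord_succ_apply', show orbit (n + 1) = pre (orbit n) from
      Function.iterate_succ_apply' pre n _, hpre, ih]

end CompWord

theorem IFS_convex_contractions_attractor_eq_closure_range_general
    {X : Type*} [MetricSpace X]
    {I : Type*}
    (f : I → X → X)
    (A : Set X) (hAne : A.Nonempty) (hAc : IsCompact A) (hAfix : (⋃ i, f i '' A) = A)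
    (aω : (ℕ → I) → X)
    (haω : ∀ (ω : ℕ → I) (B : Set X), B.Nonempty → IsCompact B →
      Filter.Tendsto
        (fun n : ℕ => EMetric.hausdorffEdist (compWord f ω n '' B) {aω ω})
        Filter.atTop (nhds 0)) :
    A = closure (Set.range aω) := by
  have hmaps (i : I) : MapsTo (f i) A A := fun x hx =>
    hAfix ▸ mem_iUnion.2 ⟨i, mem_image_of_mem _ hx⟩
  refine Subset.antisymm (fun x hx => ?_) (closure_minimal ?_ hAc.isClosed)
  · obtain ⟨ω, hω⟩ := exists_word_forall_mem_image_compWord hAfix.superset hx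
    have hxω := edist_eq_zero_of_forall_mem_of_tendsto_hausdorffEDist_singleton
      (haω ω A hAne hAc) hω
    exact subset_closure ⟨ω, (edist_eq_zero.1 hxω).symm⟩
  · rintro _ ⟨ω, rfl⟩
    exact mem_of_tendsto_hausdorffEDist_singleton (haω ω A hAne hAc) hAc.isClosed
      fun n => (mapsTo_compWord hmaps ω n).image_subset

/-- The attractor equals the closure of the set of points a_ω. -/
theorem IFS_convex_contractions_attractor_eq_closure_range
    {X : Type*} [MetricSpace X] [CompleteSpace X] [Nonempty X]
    {I : Type*} [Finite I] [Nonempty I]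
    (f : I → X → X) (hf : ∀ i, Continuous (f i))
    (a b c : I → I → ℝ)
    (ha : ∀ i j, 0 ≤ a i j) (hb : ∀ i j, 0 ≤ b i j) (hc : ∀ i j, 0 ≤ c i j)
    (hd : ∀ i j, a i j + b i j + c i j < 1)
    (hcc : ∀ i j (x y : X),
      dist (f i (f j x)) (f i (f j y)) ≤
        a i j * dist x y + b i j * dist (f i x) (f i y) + c i j * dist (f j x) (f j y))
    (A : Set X) (hAne : A.Nonempty) (hAc : IsCompact A) (hAfix : (⋃ i, f i '' A) = A)
    (aω : (ℕ → I) → X)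
    (haω : ∀ (ω : ℕ → I) (B : Set X), B.Nonempty → IsCompact B →
      Filter.Tendsto
        (fun n : ℕ => EMetric.hausdorffEdist (compWord f ω n '' B) {aω ω})
        Filter.atTop (nhds 0)) :
    A = closure (Set.range aω) :=
  IFS_convex_contractions_attractor_eq_closure_range_general f A hAne hAc hAfix aω haω
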